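/- arXiv:0911.4959 — 8 statements merged into one kernel-verified Lean document; each statement's English description precedes it below -/
import Mathlib

section
/- Let K be a field and C a small K-linear category. The following are equivalent: (1) C admits a separability family; (2) there exists a family of K-linear maps φ_{x,y} : Hom_C(y,x) → ⊕_z (Hom_C(z,x) ⊗[K] Hom_C(y,z)) (direct sum over all objects z of C), indexed by pairs of objects x, y, such that (a) for every g ∈ Hom_C(y,x) and every morphism f : x ⟶ x', φ_{x',y}(f ∘ g) is obtained from φ_{x,y}(g) by applying postcomposition with f on each first tensor factor Hom_C(z,x) → Hom_C(z,x'); (b) for every g ∈ Hom_C(y,x) and every morphism f : y' ⟶ y, φ_{x,y'}(g ∘ f) is obtained from φ_{x,y}(g) by applying precomposition with f on each second tensor factor Hom_C(y,z) → Hom_C(y',z); and (c) composing φ_{x,y} with the map ⊕_z (Hom_C(z,x) ⊗[K] Hom_C(y,z)) → Hom_C(y,x) induced on each summand by composition h ⊗ k ↦ h ∘ k gives the identity of Hom_C(y,x). -/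
/-!
A separability family is the same thing as a family of elements
`e x ∈ ⊕_z Hom(z,x) ⊗ Hom(x,z)` with `f · e x = e z · f` for every `f : x ⟶ z` and
`comp (e x) = 𝟙 x`, the categorical form of a separability idempotent. Such a family gives
the section `g ↦ e x · g` of composition, natural on both sides; conversely a bi-natural
section `φ` gives `e x = φ (𝟙 x)`, and `f · e x = φ f = e z · f` is the required compatibility.
-/

open CategoryTheory TensorProduct

/-- Composition as a `K`-linear map out of the tensor product of Hom spaces:
`h ⊗ k ↦ h ∘ k = k ≫ h`. -/
noncomputable def compMap (K : Type*) [Field K] {C : Type*} [Category C] [Preadditive C]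
    [Linear K C] (X Y Z : C) : ((Z ⟶ X) ⊗[K] (Y ⟶ Z)) →ₗ[K] (Y ⟶ X) :=
  TensorProduct.lift (LinearMap.mk₂ K (fun (h : Z ⟶ X) (k : Y ⟶ Z) => k ≫ h)
    (fun h h' k => by simp) (fun r h k => by simp)
    (fun h k k' => by simp) (fun r h k => by simp))

structure SeparabilityFamily (K : Type*) [Field K] (C : Type*) [Category C] [Preadditive C]
    [Linear K C] where
  a : ∀ x y : C, (y ⟶ x) ⊗[K] (x ⟶ y)
  finite_support : ∀ x : C, {y : C | a x y ≠ 0}.Finite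
  sum_comp : ∀ x : C, (∑ᶠ y : C, compMap K x x y (a x y)) = 𝟙 x
  compat : ∀ {x z : C} (f : x ⟶ z) (y : C),
    LinearMap.rTensor (x ⟶ y) (Linear.rightComp K y f) (a x y)
      = LinearMap.lTensor (y ⟶ z) (Linear.leftComp K y f) (a z y)

namespace DirectSum

variable {R ι N : Type*} [Semiring R] [DecidableEq ι] {M M' : ι → Type*}
  [∀ i, AddCommMonoid (M i)] [∀ i, Module R (M i)] [∀ i, AddCommMonoid (M' i)]
  [∀ i, Module R (M' i)] [AddCommMonoid N] [Module R N]

theorem toModule_lof_comp_eq_lmap (f : ∀ i, M i →ₗ[R] M' i) :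
    toModule R ι (⨁ i, M' i) (fun i => (lof R ι M' i).comp (f i)) = lmap f := by
  ext i x : 2
  simp

theorem toModule_apply_eq_finsum (φ : ∀ i, M i →ₗ[R] N) (v : ⨁ i, M i) :
    toModule R ι N φ v = ∑ᶠ i, φ i (v i) := by
  classical
  rw [finsum_eq_finsetSum_of_support_subset (s := v.support)]
  · conv_lhs => rw [← sum_support_of v]
    simp [map_sum, ← lof_eq_of R]
  · intro i hi
    rw [Function.mem_support] at hi
    exact DFinsupp.mem_support_iff.2 fun h => hi (by rw [h, map_zero])

end DirectSum

section

variable {K : Type*} [Field K] {C : Type*} [Category C] [Preadditive C] [Linear K C]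

@[simp]
lemma compMap_tmul {x y z : C} (h : z ⟶ x) (k : y ⟶ z) : compMap K x y z (h ⊗ₜ k) = k ≫ h :=
  rfl

variable (K) in
abbrev HomTensor (x y : C) := DirectSum C fun z : C => (z ⟶ x) ⊗[K] (y ⟶ z)

namespace HomTensor

noncomputable def postcomp {x x' : C} (f : x ⟶ x') (y : C) :
    HomTensor K x y →ₗ[K] HomTensor K x' y :=
  DirectSum.lmap fun z => LinearMap.rTensor _ (Linear.rightComp K z f)

noncomputable def precomp (x : C) {y y' : C} (f : y' ⟶ y) :
    HomTensor K x y →ₗ[K] HomTensor K x y' :=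
  DirectSum.lmap fun z => LinearMap.lTensor _ (Linear.leftComp K z f)

noncomputable def comp [DecidableEq C] (x y : C) : HomTensor K x y →ₗ[K] (y ⟶ x) :=
  DirectSum.toModule K C _ fun z => compMap K x y z

variable {x x' y y' y'' : C}

lemma postcomp_precomp (f : x ⟶ x') (g : y' ⟶ y) (v : HomTensor K x y) :
    postcomp f y' (precomp x g v) = precomp x' g (postcomp f y v) := by
  ext z : 1
  simp only [postcomp, precomp, DirectSum.lmap_apply]
  rw [← LinearMap.comp_apply, ← LinearMap.comp_apply, LinearMap.rTensor_comp_lTensor,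
    LinearMap.lTensor_comp_rTensor]

lemma precomp_comp (f : y'' ⟶ y') (g : y' ⟶ y) (v : HomTensor K x y) :
    precomp x (f ≫ g) v = precomp x f (precomp x g v) := by
  ext z : 1
  simp only [precomp, DirectSum.lmap_apply]
  rw [← LinearMap.comp_apply, ← LinearMap.lTensor_comp]
  congr 2
  ext k
  simp

variable (x) in
noncomputable def precompₗ (v : HomTensor K x y) (y' : C) : (y' ⟶ y) →ₗ[K] HomTensor K x y' where
  toFun f := precomp x f v
  map_add' f f' := by
    ext z : 1
    have hadd : Linear.leftComp K z (f + f') = Linear.leftComp K z f + Linear.leftComp K z f' := by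
      ext; simp
    simp only [precomp, DirectSum.lmap_apply, DirectSum.add_apply, hadd, LinearMap.lTensor_add,
      LinearMap.add_apply]
  map_smul' r f := by
    ext z : 1
    have hsmul : Linear.leftComp K z (r • f) = r • Linear.leftComp K z f := by
      ext; simp
    simp only [precomp, DirectSum.lmap_apply, DirectSum.smul_apply, hsmul, LinearMap.lTensor_smul,
      LinearMap.smul_apply, RingHom.id_apply]

lemma comp_precomp [DecidableEq C] (f : y' ⟶ y) (v : HomTensor K x y) :
    comp x y' (precomp x f v) = f ≫ comp x y v := by
  suffices (comp x y').comp (precomp x f) = (Linear.leftComp K x f).comp (comp x y) from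
    congr($this v)
  refine DirectSum.linearMap_ext _ fun z => ?_
  ext t
  simp [comp, precomp]

end HomTensor

end

open HomTensor in
structure SeparabilityElement (K : Type*) [Field K] (C : Type*) [Category C] [Preadditive C]
    [Linear K C] [DecidableEq C] where
  e : ∀ x : C, HomTensor K x x
  postcomp_eq_precomp : ∀ {x z : C} (f : x ⟶ z), postcomp f x (e x) = precomp z f (e z)
  comp_eq_id : ∀ x : C, comp x x (e x) = 𝟙 x

section

variable {K : Type*} [Field K] {C : Type*} [Category C] [Preadditive C] [Linear K C]
  [DecidableEq C]

namespace SeparabilityFamily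

noncomputable def toHomTensor (F : SeparabilityFamily K C) (x : C) : HomTensor K x x :=
  DFinsupp.mk (F.finite_support x).toFinset fun z => F.a x z

lemma toHomTensor_apply (F : SeparabilityFamily K C) (x z : C) : F.toHomTensor x z = F.a x z := by
  by_cases hz : F.a x z = 0 <;> simp [toHomTensor, DFinsupp.mk_apply, hz]

noncomputable def toSeparabilityElement (F : SeparabilityFamily K C) : SeparabilityElement K C where
  e := F.toHomTensor
  postcomp_eq_precomp f := by
    ext z : 1
    simpa [HomTensor.postcomp, HomTensor.precomp, toHomTensor_apply] using F.compat f z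
  comp_eq_id x := by
    rw [HomTensor.comp, DirectSum.toModule_apply_eq_finsum, ← F.sum_comp x]
    simp only [toHomTensor_apply]

end SeparabilityFamily

namespace SeparabilityElement

open HomTensor

def toSeparabilityFamily (E : SeparabilityElement K C) : SeparabilityFamily K C where
  a x y := E.e x y
  finite_support x := by
    classical
    exact (E.e x).support.finite_toSet.subset fun _ hy => DFinsupp.mem_support_iff.2 hy
  sum_comp x := by rw [← DirectSum.toModule_apply_eq_finsum]; exact E.comp_eq_id x
  compat f y := congr($(E.postcomp_eq_precomp f) y)

lemma _root_.nonempty_separabilityFamily_iff :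
    Nonempty (SeparabilityFamily K C) ↔ Nonempty (SeparabilityElement K C) :=
  ⟨fun ⟨F⟩ => ⟨F.toSeparabilityElement⟩, fun ⟨E⟩ => ⟨E.toSeparabilityFamily⟩⟩

variable (E : SeparabilityElement K C)

noncomputable def splitting (x y : C) : (y ⟶ x) →ₗ[K] HomTensor K x y := precompₗ x (E.e x) y

lemma splitting_apply {x y : C} (g : y ⟶ x) : E.splitting x y g = precomp x g (E.e x) := rfl

lemma splitting_comp_right {x x' y : C} (f : x ⟶ x') (g : y ⟶ x) :
    E.splitting x' y (g ≫ f) = postcomp f y (E.splitting x y g) := by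
  rw [splitting_apply, splitting_apply, precomp_comp, ← E.postcomp_eq_precomp, postcomp_precomp]

lemma splitting_comp_left {x y y' : C} (f : y' ⟶ y) (g : y ⟶ x) :
    E.splitting x y' (f ≫ g) = precomp x f (E.splitting x y g) := by
  rw [splitting_apply, splitting_apply, precomp_comp]

lemma comp_comp_splitting (x y : C) : (comp x y).comp (E.splitting x y) = LinearMap.id := by
  ext g
  rw [LinearMap.comp_apply, splitting_apply, comp_precomp, E.comp_eq_id, Category.comp_id,
    LinearMap.id_apply]

noncomputable def ofSection (φ : ∀ x y : C, (y ⟶ x) →ₗ[K] HomTensor K x y)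
    (hpost : ∀ (x x' y : C) (f : x ⟶ x') (g : y ⟶ x), φ x' y (g ≫ f) = postcomp f y (φ x y g))
    (hpre : ∀ (x y y' : C) (f : y' ⟶ y) (g : y ⟶ x), φ x y' (f ≫ g) = precomp x f (φ x y g))
    (hcomp : ∀ x y : C, (comp x y).comp (φ x y) = LinearMap.id) : SeparabilityElement K C where
  e x := φ x x (𝟙 x)
  postcomp_eq_precomp {x z} f := by
    rw [← hpost, ← hpre, Category.id_comp, Category.comp_id]
  comp_eq_id x := congr($(hcomp x x) (𝟙 x))

end SeparabilityElement

end

/-- A `K`-linear category admits a separability family iff the composition map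
`⊕_z (Hom(z,x) ⊗ Hom(y,z)) → Hom(y,x)` admits a family of sections `φ` that is natural
(a bimodule map) in both variables. -/
theorem separable_iff_section (K : Type*) [Field K]
    (C : Type*) [SmallCategory C] [DecidableEq C] [Preadditive C] [Linear K C] :
    Nonempty (SeparabilityFamily K C) ↔
      ∃ φ : (∀ x y : C, (y ⟶ x) →ₗ[K] DirectSum C (fun z : C => (z ⟶ x) ⊗[K] (y ⟶ z))),
        (∀ (x x' y : C) (f : x ⟶ x') (g : y ⟶ x),
          φ x' y (g ≫ f) =
            DirectSum.toModule K C (DirectSum C (fun z : C => (z ⟶ x') ⊗[K] (y ⟶ z)))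
              (fun z => (DirectSum.lof K C (fun z : C => (z ⟶ x') ⊗[K] (y ⟶ z)) z).comp
                (LinearMap.rTensor (y ⟶ z) (Linear.rightComp K z f)))
              (φ x y g)) ∧
        (∀ (x y y' : C) (f : y' ⟶ y) (g : y ⟶ x),
          φ x y' (f ≫ g) =
            DirectSum.toModule K C (DirectSum C (fun z : C => (z ⟶ x) ⊗[K] (y' ⟶ z)))
              (fun z => (DirectSum.lof K C (fun z : C => (z ⟶ x) ⊗[K] (y' ⟶ z)) z).comp
                (LinearMap.lTensor (z ⟶ x) (Linear.leftComp K z f)))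
              (φ x y g)) ∧
        (∀ x y : C,
          (DirectSum.toModule K C (y ⟶ x) (fun z => compMap K x y z)).comp (φ x y) =
            LinearMap.id) := by
  rw [nonempty_separabilityFamily_iff]
  simp only [DirectSum.toModule_lof_comp_eq_lmap]
  constructor
  · rintro ⟨E⟩
    exact ⟨E.splitting, fun _ _ _ => E.splitting_comp_right, fun _ _ _ => E.splitting_comp_left,
      E.comp_comp_splitting⟩
  · rintro ⟨φ, hpost, hpre, hcomp⟩
    exact ⟨.ofSection φ hpost hpre hcomp⟩
end

section
/- Let K be a field and C a small K-linear category. If C admits a separability family, then C is locally finite dimensional: for all objects x, y of C, the K-vector space Hom_C(x,y) is finite dimensional. -/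
/-! Write `a x y = ∑ᵢ gᵢ ⊗ hᵢ` with the `hᵢ` running through a basis of `x ⟶ y`. Composing
`𝟙 x = ∑ᵢ hᵢ ≫ gᵢ` with `f : x ⟶ z` gives `f = ∑ᵢ hᵢ ≫ (gᵢ ≫ f)`. By the compatibility
condition, `∑ᵢ (gᵢ ≫ f) ⊗ hᵢ` is the image of `a z y` under `id ⊗ (f ≫ -)`, so it lies in
`W ⊗ (x ⟶ y)` for a finite-dimensional `W ⊆ (y ⟶ z)` that contains the left factors of `a z y`
and does not depend on `f`. Comparing coefficients of the basis vectors `hᵢ` gives `gᵢ ≫ f ∈ W`,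
hence every `f` lies in the finite-dimensional space `∑ hᵢ ≫ W`. -/

open CategoryTheory TensorProduct

namespace TensorProduct

variable {R M M' N N' κ : Type*} [CommSemiring R] [AddCommMonoid M] [Module R M]
  [AddCommMonoid M'] [Module R M'] [AddCommMonoid N] [Module R N] [AddCommMonoid N'] [Module R N']
  [DecidableEq κ] (𝒞 : Module.Basis κ R N)

lemma equivFinsuppOfBasisRight_rTensor_apply (g : M →ₗ[R] M') (t : M ⊗[R] N) (i : κ) :
    equivFinsuppOfBasisRight 𝒞 (g.rTensor N t) i = g (equivFinsuppOfBasisRight 𝒞 t i) := by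
  induction t with
  | zero => simp
  | tmul m n => simp
  | add t₁ t₂ h₁ h₂ => simp [h₁, h₂]

lemma equivFinsuppOfBasisRight_lTensor_mem {W : Submodule R M} {t : M ⊗[R] N'}
    (ht : t ∈ LinearMap.range (W.subtype.rTensor N')) (φ : N' →ₗ[R] N) (i : κ) :
    equivFinsuppOfBasisRight 𝒞 (φ.lTensor M t) i ∈ W := by
  obtain ⟨t, rfl⟩ := ht
  rw [← LinearMap.comp_apply, LinearMap.lTensor_comp_rTensor, ← LinearMap.rTensor_comp_lTensor,
    LinearMap.comp_apply, equivFinsuppOfBasisRight_rTensor_apply]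
  exact Submodule.coe_mem _

end TensorProduct

section

variable {K : Type*} [Field K] {C : Type*} [Category C] [Preadditive C] [Linear K C]

lemma compMap_eq_finsuppSum {X Y Z : C} {κ : Type*} [DecidableEq κ]
    (𝒞 : Module.Basis κ K (Y ⟶ Z)) (t : (Z ⟶ X) ⊗[K] (Y ⟶ Z)) :
    compMap K X Y Z t = (equivFinsuppOfBasisRight 𝒞 t).sum fun i g => 𝒞 i ≫ g := by
  conv_lhs => rw [← (equivFinsuppOfBasisRight 𝒞).symm_apply_apply t,
    equivFinsuppOfBasisRight_symm_apply, map_finsuppSum]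
  simp [compMap]

namespace SeparabilityFamily

variable (s : SeparabilityFamily K C)

lemma sum_compMap_eq_id (x : C) :
    ∑ y ∈ (s.finite_support x).toFinset, compMap K x x y (s.a x y) = 𝟙 x := by
  rw [← s.sum_comp x]
  refine (finsum_eq_sum_of_support_subset _ fun y hy => ?_).symm
  rw [Set.Finite.coe_toFinset]
  exact fun h0 => hy (by simp [h0])

lemma eq_sum_comp {x z : C} (f : x ⟶ z) {κ : C → Type*} [∀ y, DecidableEq (κ y)]
    (𝒞 : ∀ y, Module.Basis (κ y) K (x ⟶ y)) :
    f = ∑ y ∈ (s.finite_support x).toFinset,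
      (equivFinsuppOfBasisRight (𝒞 y) (s.a x y)).sum fun i g => 𝒞 y i ≫ g ≫ f := by
  calc f = (∑ y ∈ (s.finite_support x).toFinset, compMap K x x y (s.a x y)) ≫ f := by
        rw [s.sum_compMap_eq_id, Category.id_comp]
    _ = _ := by
        rw [Preadditive.sum_comp]
        refine Finset.sum_congr rfl fun y _ => ?_
        rw [compMap_eq_finsuppSum (𝒞 y), Finsupp.sum, Preadditive.sum_comp]
        simp only [Category.assoc]
        rfl

lemma coeff_comp_mem {x z : C} (f : x ⟶ z) (y : C) {κ : Type*} [DecidableEq κ]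
    (𝒞 : Module.Basis κ K (x ⟶ y)) {W : Submodule K (y ⟶ z)}
    (hW : s.a z y ∈ LinearMap.range (W.subtype.rTensor (z ⟶ y))) (i : κ) :
    equivFinsuppOfBasisRight 𝒞 (s.a x y) i ≫ f ∈ W := by
  have h := congr(equivFinsuppOfBasisRight 𝒞 $(s.compat f y) i)
  rw [equivFinsuppOfBasisRight_rTensor_apply, Linear.rightComp_apply] at h
  exact h ▸ equivFinsuppOfBasisRight_lTensor_mem 𝒞 hW _ i

end SeparabilityFamily

end

/-- A separable `K`-linear category is locally finite dimensional. -/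
theorem separable_locally_finite_dimensional (K : Type*) [Field K]
    (C : Type*) [SmallCategory C] [Preadditive C] [Linear K C]
    (s : SeparabilityFamily K C) :
    ∀ x y : C, FiniteDimensional K (x ⟶ y) := by
  classical
  intro x z
  let 𝒞 (y : C) := Module.Basis.ofVectorSpace K (x ⟶ y)
  let c (y : C) := equivFinsuppOfBasisRight (𝒞 y) (s.a x y)
  choose W hWfin hW using fun y : C =>
    exists_finite_submodule_left_of_setFinite {s.a z y} (Set.finite_singleton _)
  let V := (s.finite_support x).toFinset.sup fun y =>
    (c y).support.sup fun i => (W y).map (Linear.leftComp K z (𝒞 y i))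
  have hV : V = ⊤ := by
    refine Submodule.eq_top_iff'.mpr fun f => ?_
    rw [s.eq_sum_comp f 𝒞]
    simp only [V, Finset.sup_eq_iSup]
    exact Submodule.sum_mem_biSup fun y _ => Submodule.sum_mem_biSup fun i _ =>
      Submodule.mem_map_of_mem (s.coeff_comp_mem f y (𝒞 y) (hW y rfl) i)
  exact Module.Finite.equiv (LinearEquiv.ofTop V hV)
end

section
/- Let K be a field and G a small groupoid. The K-linearization K[G] admits a separability family if and only if for all objects x, y of G the set Hom_G(x,y) is finite and, whenever Hom_G(x,y) is nonempty, its cardinality (viewed as an element of K) is invertible in K. -/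
/-!
Write `t (g, h)` for the coefficient of a tensor `t` of Hom spaces of `K[G]` at the basis tensor
`g ⊗ h`. Compatibility with `f = [τ]` says `a x y (g ≫ τ⁻¹, h) = a z y (g, τ⁻¹ ≫ h)`; for
`τ ∈ Aut x` this makes the diagonal coefficient `c_y = a x y (σ⁻¹, σ)` independent of
`σ : x ⟶ y`. The coefficient of `𝟙 x` in `∑ y, comp (a x y) = 𝟙 x` is therefore
`∑ y, |G(x, y)| c_y = 1`, and since all nonempty `G(x, y)` have the same cardinality `n`, we get
`n ≠ 0` in `K`. As `Nat.card` of an infinite type is `0`, this also gives finiteness.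

Conversely, fix a representative `r x` of each connected component and put
`a x (r x) = n⁻¹ ∑ σ, σ⁻¹ ⊗ σ` (sum over `σ : x ⟶ r x`) and `a x y = 0` for `y ≠ r x`.
-/

open CategoryTheory TensorProduct

theorem finsum_const_eq_natCard_smul {M : Type*} [AddCommMonoid M] (α : Type*) (a : M) :
    ∑ᶠ _ : α, a = Nat.card α • a := by
  rcases finite_or_infinite α with h | h
  · have := Fintype.ofFinite α
    rw [finsum_eq_sum_of_fintype, Finset.sum_const, Finset.card_univ, Nat.card_eq_fintype_card]
  · rw [Nat.card_eq_zero_of_infinite, zero_smul]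
    by_cases ha : a = 0
    · simp [ha]
    · exact finsum_of_infinite_support (by rwa [Function.support_const ha, Set.infinite_univ_iff])

theorem CategoryTheory.Groupoid.natCard_hom_congr {G : Type*} [Groupoid G] {x x' y y' : G}
    (f : x ⟶ x') (g : y ⟶ y') : Nat.card (x ⟶ y) = Nat.card (x' ⟶ y') :=
  Nat.card_congr ((asIso f).homCongr (asIso g))

theorem compMap_tmul_s2 (K : Type*) [Field K] {C : Type*} [Category C] [Preadditive C] [Linear K C]
    {X Y Z : C} (g : Z ⟶ X) (f : Y ⟶ Z) : compMap K X Y Z (g ⊗ₜ f) = f ≫ g :=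
  rfl

namespace CategoryTheory.Free

section Category

variable {R : Type*} [CommRing R] {C : Type*} [Category C]

/-- Morphisms of `Free R C` are by definition finitely supported functions; this makes the
identification explicit, so that they can be evaluated at morphisms of `C`. -/
noncomputable def toFinsupp {x y : C} : (of R x ⟶ of R y) ≃ₗ[R] ((x ⟶ y) →₀ R) :=
  LinearEquiv.refl R _

/-- `Finsupp.single σ r` as a morphism of `Free R C`: a type ascription
`(Finsupp.single σ r : of R x ⟶ of R y)` would leave its inferred type a `Finsupp`, which
rewriting with lemmas about morphisms does not see through. -/
noncomputable def homSingle {x y : C} (σ : x ⟶ y) (r : R) : of R x ⟶ of R y :=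
  Finsupp.single σ r

@[simp]
theorem toFinsupp_homSingle {x y : C} (σ : x ⟶ y) (r : R) :
    toFinsupp (homSingle σ r) = Finsupp.single σ r :=
  rfl

@[simp]
theorem toFinsupp_id (x : C) : toFinsupp (𝟙 (of R x)) = Finsupp.single (𝟙 x) 1 :=
  rfl

theorem homSingle_comp_homSingle {x y z : C} (σ : x ⟶ y) (τ : y ⟶ z) (r s : R) :
    homSingle σ r ≫ homSingle τ s = homSingle (σ ≫ τ) (r * s) :=
  single_comp_single R C σ τ r s

theorem homSingle_comp_homSingle_inv {x y : C} (σ : x ⟶ y) [IsIso σ] :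
    homSingle σ (1 : R) ≫ homSingle (inv σ) 1 = 𝟙 (of R x) := by
  rw [homSingle_comp_homSingle, IsIso.hom_inv_id, mul_one]
  rfl

@[elab_as_elim]
theorem hom_induction {x y : C} {P : (of R x ⟶ of R y) → Prop} (u : of R x ⟶ of R y)
    (zero : P 0) (add : ∀ u v, P u → P v → P (u + v))
    (homSingle : ∀ (σ : x ⟶ y) (r : R), P (homSingle σ r)) : P u :=
  Finsupp.induction_linear (motive := fun w => P (toFinsupp.symm w)) (toFinsupp u) zero
    (fun _ _ => add _ _) homSingle

noncomputable def tensorToFinsupp {x y z w : C} :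
    ((of R x ⟶ of R y) ⊗[R] (of R z ⟶ of R w)) ≃ₗ[R] ((x ⟶ y) × (z ⟶ w) →₀ R) :=
  TensorProduct.congr toFinsupp toFinsupp ≪≫ₗ finsuppTensorFinsupp' R _ _

@[simp]
theorem tensorToFinsupp_tmul {x y z w : C} (u : of R x ⟶ of R y) (v : of R z ⟶ of R w)
    (g : x ⟶ y) (h : z ⟶ w) :
    tensorToFinsupp (u ⊗ₜ v) (g, h) = toFinsupp u g * toFinsupp v h := by
  simp [tensorToFinsupp]

end Category

section Groupoid

variable {R : Type*} [CommRing R] {G : Type*} [Groupoid G]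

theorem toFinsupp_comp_homSingle {x y z : G} (u : of R x ⟶ of R y) (τ : y ⟶ z) (r : R)
    (g : x ⟶ z) : toFinsupp (u ≫ homSingle τ r) g = toFinsupp u (g ≫ inv τ) * r := by
  classical
  induction u using hom_induction with
  | zero => simp
  | add u v hu hv => simp [hu, hv, add_mul]
  | homSingle σ s =>
    simp only [homSingle_comp_homSingle, toFinsupp_homSingle, Finsupp.single_apply,
      ← IsIso.eq_comp_inv]
    split_ifs <;> simp

theorem toFinsupp_homSingle_comp {x y z : G} (σ : x ⟶ y) (r : R) (v : of R y ⟶ of R z)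
    (h : x ⟶ z) : toFinsupp (homSingle σ r ≫ v) h = r * toFinsupp v (inv σ ≫ h) := by
  classical
  induction v using hom_induction with
  | zero => simp
  | add u v hu hv => simp [hu, hv, mul_add]
  | homSingle τ s =>
    simp only [homSingle_comp_homSingle, toFinsupp_homSingle, Finsupp.single_apply,
      ← IsIso.eq_inv_comp]
    split_ifs <;> simp

theorem toFinsupp_comp_apply_id {x y : G} (v : of R x ⟶ of R y) (u : of R y ⟶ of R x) :
    toFinsupp (v ≫ u) (𝟙 x) = ∑ᶠ σ : x ⟶ y, toFinsupp u (inv σ) * toFinsupp v σ := by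
  induction v using hom_induction with
  | zero => simp
  | add v w hv hw =>
    have hfin (v : of R x ⟶ of R y) :
        (Function.support fun σ => toFinsupp u (inv σ) * toFinsupp v σ).Finite :=
      (toFinsupp v).hasFiniteSupport.subset fun _ => right_ne_zero_of_mul
    simp [hv, hw, mul_add, finsum_add_distrib (hfin v) (hfin w)]
  | homSingle τ s =>
    rw [toFinsupp_homSingle_comp, Category.comp_id, finsum_eq_single _ τ]
    · simp [mul_comm]
    · intro σ hσ
      simp [Ne.symm hσ]

theorem tensorToFinsupp_rTensor_rightComp_homSingle {x y z : G} (τ : x ⟶ z) (r : R)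
    (t : (of R y ⟶ of R x) ⊗[R] (of R x ⟶ of R y)) (g : y ⟶ z) (h : x ⟶ y) :
    tensorToFinsupp ((Linear.rightComp R (of R y) (homSingle τ r)).rTensor _ t) (g, h) =
      tensorToFinsupp t (g ≫ inv τ, h) * r := by
  induction t with
  | zero => simp
  | tmul u v => simp [toFinsupp_comp_homSingle, mul_right_comm]
  | add s t hs ht => simp [hs, ht, add_mul]

theorem tensorToFinsupp_lTensor_leftComp_homSingle {x y z : G} (τ : x ⟶ z) (r : R)
    (t : (of R y ⟶ of R z) ⊗[R] (of R z ⟶ of R y)) (g : y ⟶ z) (h : x ⟶ y) :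
    tensorToFinsupp ((Linear.leftComp R (of R y) (homSingle τ r)).lTensor _ t) (g, h) =
      r * tensorToFinsupp t (g, inv τ ≫ h) := by
  induction t with
  | zero => simp
  | tmul u v => simp [toFinsupp_homSingle_comp, mul_left_comm]
  | add s t hs ht => simp [hs, ht, mul_add]

end Groupoid

variable {K : Type*} [Field K] {G : Type*} [Groupoid G]

theorem toFinsupp_compMap_apply_id {x y : G} (t : (of K y ⟶ of K x) ⊗[K] (of K x ⟶ of K y)) :
    toFinsupp (compMap K (of K x) (of K x) (of K y) t) (𝟙 x) =
      ∑ᶠ σ : x ⟶ y, tensorToFinsupp t (inv σ, σ) := by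
  induction t with
  | zero => simp
  | tmul u v => simp [compMap_tmul_s2, toFinsupp_comp_apply_id]
  | add s t hs ht =>
    have hfin (t : (of K y ⟶ of K x) ⊗[K] (of K x ⟶ of K y)) :
        (Function.support fun σ : x ⟶ y => tensorToFinsupp t (inv σ, σ)).Finite :=
      (tensorToFinsupp t).hasFiniteSupport.preimage fun _ _ _ _ h => (Prod.ext_iff.mp h).2
    simp [hs, ht, finsum_add_distrib (hfin s) (hfin t)]

end CategoryTheory.Free

namespace SeparabilityFamily

open Free

variable {K : Type*} [Field K] {G : Type*} [Groupoid G] (F : SeparabilityFamily K (Free K G))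

theorem coeff_comp_inv_eq {x y z : G} (f : x ⟶ z) (g : y ⟶ z) (h : x ⟶ y) :
    tensorToFinsupp (F.a (of K x) (of K y)) (g ≫ inv f, h) =
      tensorToFinsupp (F.a (of K z) (of K y)) (g, inv f ≫ h) := by
  simpa [tensorToFinsupp_rTensor_rightComp_homSingle, tensorToFinsupp_lTensor_leftComp_homSingle]
    using congrArg (tensorToFinsupp · (g, h)) (F.compat (homSingle f 1) (of K y))

theorem coeff_inv_self_eq {x y : G} (σ σ' : x ⟶ y) :
    tensorToFinsupp (F.a (of K x) (of K y)) (inv σ, σ) =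
      tensorToFinsupp (F.a (of K x) (of K y)) (inv σ', σ') := by
  simpa using F.coeff_comp_inv_eq (σ ≫ inv σ') (inv σ') σ

theorem finsum_finsum_coeff_inv_self (x : G) :
    ∑ᶠ (y : G) (σ : x ⟶ y), tensorToFinsupp (F.a (of K x) (of K y)) (inv σ, σ) = 1 := by
  have hfin : (Function.support fun y : Free K G =>
      compMap K (of K x) (of K x) y (F.a (of K x) y)).Finite :=
    (F.finite_support x).subset fun y hy h => hy <| (congrArg _ h).trans (map_zero _)
  calc ∑ᶠ (y : G) (σ : x ⟶ y), tensorToFinsupp (F.a (of K x) (of K y)) (inv σ, σ)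
      = ∑ᶠ y : Free K G, toFinsupp (compMap K (of K x) (of K x) y (F.a (of K x) y)) (𝟙 x) :=
        finsum_congr fun y => (toFinsupp_compMap_apply_id _).symm
    _ = toFinsupp (∑ᶠ y : Free K G, compMap K (of K x) (of K x) y (F.a (of K x) y)) (𝟙 x) :=
        (map_finsum (Finsupp.lapply (𝟙 x) ∘ₗ toFinsupp.toLinearMap) hfin).symm
    _ = 1 := by rw [F.sum_comp, toFinsupp_id, Finsupp.single_eq_same]

theorem natCard_hom_ne_zero (F : SeparabilityFamily K (Free K G)) {x y : G} (f : x ⟶ y) :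
    (Nat.card (x ⟶ y) : K) ≠ 0 := by
  intro hcard
  refine one_ne_zero ((F.finsum_finsum_coeff_inv_self x).symm.trans (finsum_eq_zero_of_forall_eq_zero ?_))
  intro y'
  rcases isEmpty_or_nonempty (x ⟶ y') with _ | ⟨⟨σ⟩⟩
  · exact finsum_of_isEmpty _
  · rw [finsum_congr fun τ => F.coeff_inv_self_eq τ σ, finsum_const_eq_natCard_smul,
      Groupoid.natCard_hom_congr (𝟙 x) (inv σ ≫ f), nsmul_eq_mul, hcard, zero_mul]

theorem finite_hom (F : SeparabilityFamily K (Free K G)) (x y : G) : Finite (x ⟶ y) := by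
  rcases isEmpty_or_nonempty (x ⟶ y) with _ | ⟨⟨f⟩⟩
  · infer_instance
  · exact Nat.finite_of_card_ne_zero fun h => F.natCard_hom_ne_zero f (by rw [h, Nat.cast_zero])

end SeparabilityFamily

namespace CategoryTheory.Free

variable {K : Type*} [Field K] {G : Type*} [Groupoid G]

variable (K) in
noncomputable def averagingTensor (x y : G) : (of K y ⟶ of K x) ⊗[K] (of K x ⟶ of K y) :=
  (Nat.card (x ⟶ y) : K)⁻¹ • ∑ᶠ σ : x ⟶ y, homSingle (inv σ) 1 ⊗ₜ homSingle σ 1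

theorem compMap_averagingTensor {x y : G} [Finite (x ⟶ y)]
    (hcard : (Nat.card (x ⟶ y) : K) ≠ 0) :
    compMap K (of K x) (of K x) (of K y) (averagingTensor K x y) = 𝟙 _ := by
  simp only [averagingTensor, map_smul, map_finsum _ (Set.toFinite _), compMap_tmul_s2,
    homSingle_comp_homSingle_inv, finsum_const_eq_natCard_smul, ← Nat.cast_smul_eq_nsmul K,
    smul_smul, inv_mul_cancel₀ hcard, one_smul]

open scoped Classical in
theorem tensorToFinsupp_averagingTensor {x y : G} [Finite (x ⟶ y)] (g : y ⟶ x) (h : x ⟶ y) :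
    tensorToFinsupp (averagingTensor K x y) (g, h) =
      if g = inv h then (Nat.card (x ⟶ y) : K)⁻¹ else 0 := by
  rw [averagingTensor, map_smul, Finsupp.smul_apply, smul_eq_mul,
    ← Finsupp.lapply_apply (R := K), ← LinearEquiv.coe_toLinearMap, ← LinearMap.comp_apply,
    map_finsum _ (Set.toFinite _), finsum_eq_single _ h fun σ hσ => by simp [hσ]]
  simp [Finsupp.single_apply, eq_comm]

variable (K) in
/-- The family is concentrated on a chosen object `(fromSkeleton G).obj (toSkeleton x)` of the
component of `x`: compatibility forces `a x y` and `a z y` to vanish for the same `y` when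
`x ≅ z`. -/
noncomputable def separabilityTensor (x y : G) : (of K y ⟶ of K x) ⊗[K] (of K x ⟶ of K y) :=
  open scoped Classical in
  if y = (fromSkeleton G).obj (toSkeleton x) then averagingTensor K x y else 0

theorem finsum_compMap_separabilityTensor (x : G)
    [Finite (x ⟶ (fromSkeleton G).obj (toSkeleton x))]
    (hcard : (Nat.card (x ⟶ (fromSkeleton G).obj (toSkeleton x)) : K) ≠ 0) :
    ∑ᶠ y : G, compMap K (of K x) (of K x) (of K y) (separabilityTensor K x y) = 𝟙 _ := by
  rw [finsum_eq_single _ ((fromSkeleton G).obj (toSkeleton x))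
    fun y hy => by rw [separabilityTensor, if_neg hy, map_zero], separabilityTensor, if_pos rfl,
    compMap_averagingTensor hcard]

theorem rTensor_rightComp_separabilityTensor [∀ x y : G, Finite (x ⟶ y)] {x z : G}
    (f : of K x ⟶ of K z) (y : G) :
    (Linear.rightComp K (of K y) f).rTensor _ (separabilityTensor K x y) =
      (Linear.leftComp K (of K y) f).lTensor _ (separabilityTensor K z y) := by
  induction f using hom_induction with
  | zero =>
    have hr : Linear.rightComp K (of K y) (0 : of K x ⟶ of K z) = 0 :=
      LinearMap.ext fun _ => by simp
    have hl : Linear.leftComp K (of K y) (0 : of K x ⟶ of K z) = 0 :=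
      LinearMap.ext fun _ => by simp
    simp [hr, hl]
  | add f f' hf hf' =>
    have hr : Linear.rightComp K (of K y) (f + f') =
        Linear.rightComp K (of K y) f + Linear.rightComp K (of K y) f' :=
      LinearMap.ext fun _ => by simp
    have hl : Linear.leftComp K (of K y) (f + f') =
        Linear.leftComp K (of K y) f + Linear.leftComp K (of K y) f' :=
      LinearMap.ext fun _ => by simp
    simp [hr, hl, LinearMap.rTensor_add, LinearMap.lTensor_add, hf, hf']
  | homSingle τ r =>
    refine tensorToFinsupp.injective (Finsupp.ext fun ⟨g, h⟩ => ?_)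
    rw [tensorToFinsupp_rTensor_rightComp_homSingle, tensorToFinsupp_lTensor_leftComp_homSingle,
      separabilityTensor, separabilityTensor, congr_toSkeleton_of_iso (asIso τ)]
    split_ifs
    · rw [tensorToFinsupp_averagingTensor, tensorToFinsupp_averagingTensor,
        Groupoid.natCard_hom_congr τ (𝟙 y), IsIso.inv_comp, IsIso.inv_inv, IsIso.comp_inv_eq,
        mul_comm]
    · simp

variable (K) in
noncomputable def separabilityFamily [∀ x y : G, Finite (x ⟶ y)]
    (hcard : ∀ x y : G, Nonempty (x ⟶ y) → (Nat.card (x ⟶ y) : K) ≠ 0) :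
    SeparabilityFamily K (Free K G) where
  a := separabilityTensor K (G := G)
  finite_support x :=
    (Set.finite_singleton ((fromSkeleton G).obj (toSkeleton (C := G) x))).subset
      fun _ hy => of_not_not fun hne => hy (if_neg hne)
  sum_comp (x : G) := finsum_compMap_separabilityTensor x
    (hcard _ _ ⟨(fromSkeletonToSkeletonIso x).inv⟩)
  compat {_ _ : G} f (y : G) := rTensor_rightComp_separabilityTensor f y

end CategoryTheory.Free

/-- `K[G]` is separable iff all Hom-sets of the groupoid `G` are finite of cardinality
invertible in `K` (whenever nonempty). -/
theorem free_groupoid_separable_iff (K : Type*) [Field K]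
    (G : Type*) [Groupoid G] :
    Nonempty (SeparabilityFamily K (Free K G)) ↔
      ∀ x y : G, Finite (x ⟶ y) ∧
        (Nonempty (x ⟶ y) → IsUnit ((Nat.card (x ⟶ y) : K))) := by
  constructor
  · rintro ⟨F⟩ x y
    exact ⟨F.finite_hom x y, fun ⟨f⟩ => (F.natCard_hom_ne_zero f).isUnit⟩
  · intro h
    have : ∀ x y : G, Finite (x ⟶ y) := fun x y => (h x y).1
    exact ⟨Free.separabilityFamily K fun x y hxy => ((h x y).2 hxy).ne_zero⟩
end

section
/- Let K be a field, G a small groupoid, and a a separability family for the K-linearization K[G]. Fix objects x, y and write a x y = Σ_{g ∈ Hom_G(y,x), h ∈ Hom_G(x,y)} α_{g,h} · g ⊗ h in the standard basis {g ⊗ h} of Hom_{K[G]}(y,x) ⊗[K] Hom_{K[G]}(x,y). Then the coefficient α_{u,u^{-1}} does not depend on u: for all u, v ∈ Hom_G(y,x), α_{u,u^{-1}} = α_{v,v^{-1}}. -/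
/-!
Apply the compatibility axiom of the separability family to the basis morphism `u : y ⟶ x`
of `K[G]`, and read off the coefficient of `u ⊗ 𝟙_y` on both sides. Since `u` is invertible,
`g ↦ g ≫ u` and `h ↦ u ≫ h` permute the basis elements, so that coefficient is `α_{𝟙,𝟙}` of
`a y y` on one side and `α_{u,u⁻¹}` of `a x y` on the other.
-/

open CategoryTheory TensorProduct

/-- The coefficient `α_{g,h}` of `g ⊗ h` in an element of
`Hom_{K[G]}(y,x) ⊗[K] Hom_{K[G]}(x,y)`, with respect to the standard basis. -/
noncomputable def coeff (K : Type*) [Field K] {G : Type*} [Groupoid G] {x y : G}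
    (t : (Free.of K y ⟶ Free.of K x) ⊗[K] (Free.of K x ⟶ Free.of K y))
    (g : y ⟶ x) (h : x ⟶ y) : K :=
  TensorProduct.lid K K
    (TensorProduct.map (Finsupp.lapply g) (Finsupp.lapply h) t)

namespace CategoryTheory.Free

variable {R : Type*} [CommRing R] {C : Type*} [Category C]

theorem lapply_comp_rightComp_single {X Y Z : C} (f : Y ⟶ Z) [IsIso f] (c : X ⟶ Z) :
    (Finsupp.lapply c).comp (Linear.rightComp R (Free.of R X)
        (Finsupp.single f 1 : Free.of R Y ⟶ Free.of R Z)) =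
      Finsupp.lapply (c ≫ inv f) := by
  classical
  refine Finsupp.lhom_ext fun (g : X ⟶ Y) r => ?_
  erw [LinearMap.comp_apply, Linear.rightComp_apply, single_comp_single, mul_one]
  erw [Finsupp.lapply_apply, Finsupp.lapply_apply, Finsupp.single_apply, Finsupp.single_apply]
  rw [IsIso.eq_comp_inv]
  congr 1 -- the two `if`s differ only in their `Decidable` instances

theorem lapply_comp_leftComp_single {X Y Z : C} (f : X ⟶ Y) [IsIso f] (c : X ⟶ Z) :
    (Finsupp.lapply c).comp (Linear.leftComp R (Free.of R Z)
        (Finsupp.single f 1 : Free.of R X ⟶ Free.of R Y)) =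
      Finsupp.lapply (inv f ≫ c) := by
  classical
  refine Finsupp.lhom_ext fun (g : Y ⟶ Z) r => ?_
  erw [LinearMap.comp_apply, Linear.leftComp_apply, single_comp_single, one_mul]
  erw [Finsupp.lapply_apply, Finsupp.lapply_apply, Finsupp.single_apply, Finsupp.single_apply]
  rw [IsIso.eq_inv_comp]
  congr 1

theorem map_lapply_rTensor_rightComp_single {X Y Z W V : C} (f : Y ⟶ Z) [IsIso f] (c : X ⟶ Z)
    (d : W ⟶ V) (t : (Free.of R X ⟶ Free.of R Y) ⊗[R] (Free.of R W ⟶ Free.of R V)) :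
    TensorProduct.map (Finsupp.lapply c) (Finsupp.lapply d)
        (LinearMap.rTensor (Free.of R W ⟶ Free.of R V) (Linear.rightComp R (Free.of R X)
          (Finsupp.single f 1 : Free.of R Y ⟶ Free.of R Z)) t) =
      TensorProduct.map (Finsupp.lapply (c ≫ inv f)) (Finsupp.lapply d) t := by
  erw [← LinearMap.comp_apply, LinearMap.map_comp_rTensor, lapply_comp_rightComp_single]
  rfl

theorem map_lapply_lTensor_leftComp_single {X Y Z W V : C} (f : X ⟶ Y) [IsIso f] (c : X ⟶ Z)
    (d : W ⟶ V) (t : (Free.of R W ⟶ Free.of R V) ⊗[R] (Free.of R Y ⟶ Free.of R Z)) :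
    TensorProduct.map (Finsupp.lapply d) (Finsupp.lapply c)
        (LinearMap.lTensor (Free.of R W ⟶ Free.of R V) (Linear.leftComp R (Free.of R Z)
          (Finsupp.single f 1 : Free.of R X ⟶ Free.of R Y)) t) =
      TensorProduct.map (Finsupp.lapply d) (Finsupp.lapply (inv f ≫ c)) t := by
  erw [← LinearMap.comp_apply, LinearMap.map_comp_lTensor, lapply_comp_leftComp_single]
  rfl

end CategoryTheory.Free

theorem SeparabilityFamily.coeff_inv_eq_coeff_id {K : Type*} [Field K] {G : Type*} [Groupoid G]
    (s : SeparabilityFamily K (Free K G)) {x y : G} (w : y ⟶ x) :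
    coeff K (s.a (Free.of K x) (Free.of K y)) w (Groupoid.inv w) =
      coeff K (s.a (Free.of K y) (Free.of K y)) (𝟙 y) (𝟙 y) := by
  have compat := congr(TensorProduct.lid K K (TensorProduct.map (Finsupp.lapply w)
    (Finsupp.lapply (𝟙 y))
      $(s.compat (Finsupp.single w 1 : Free.of K y ⟶ Free.of K x) (Free.of K y))))
  rw [Free.map_lapply_rTensor_rightComp_single, Free.map_lapply_lTensor_leftComp_single] at compat
  simp only [coeff, Groupoid.inv_eq_inv, IsIso.hom_inv_id, Category.comp_id] at compat ⊢
  exact compat.symm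

/-- For a separability family on `K[G]`, the coefficient `α_{u,u⁻¹}` of `a x y` does not
depend on `u ∈ Hom_G(y,x)`. -/
theorem sepFamily_coeff_inv_independent (K : Type*) [Field K]
    (G : Type*) [Groupoid G] (s : SeparabilityFamily K (Free K G))
    (x y : G) (u v : y ⟶ x) :
    coeff K (s.a (Free.of K x) (Free.of K y)) u (Groupoid.inv u) =
      coeff K (s.a (Free.of K x) (Free.of K y)) v (Groupoid.inv v) := by
  rw [s.coeff_inv_eq_coeff_id u, s.coeff_inv_eq_coeff_id v]
end

section
/- Let K be a field and A a small delta category (a skeletal category in which every endomorphism is an identity). If a is a separability family for the K-linearization K[A], then a x y = 0 whenever x ≠ y. -/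
/-! In a delta category two distinct objects cannot have morphisms in both directions: the
composites would be identities, making the objects isomorphic, hence equal. So one of the Hom
spaces of `K[A]` between them is zero, and so is the tensor product in which `a x y` lives. -/

open CategoryTheory TensorProduct

theorem CategoryTheory.Skeletal.isEmpty_hom_or_isEmpty_hom_of_ne {A : Type*} [Category A]
    (hskel : Skeletal A) (hdelta : ∀ (x : A) (f : x ⟶ x), f = 𝟙 x) {x y : A} (hxy : x ≠ y) :
    IsEmpty (x ⟶ y) ∨ IsEmpty (y ⟶ x) := by
  by_contra! h
  obtain ⟨⟨f⟩, ⟨g⟩⟩ := h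
  exact hxy (hskel ⟨⟨f, g, hdelta _ _, hdelta _ _⟩⟩)

instance CategoryTheory.Free.subsingleton_hom_of_isEmpty (R : Type*) [CommRing R] {C : Type*}
    [Category C] {x y : C} [IsEmpty (x ⟶ y)] : Subsingleton (Free.of R x ⟶ Free.of R y) :=
  inferInstanceAs (Subsingleton ((x ⟶ y) →₀ R))

/-- For a delta category `A`, any separability family for `K[A]` vanishes off the
diagonal. -/
theorem free_delta_sepFamily_offdiag_zero (K : Type*) [Field K]
    (A : Type*) [SmallCategory A]
    (hskel : Skeletal A)
    (hdelta : ∀ (x : A) (f : x ⟶ x), f = 𝟙 x)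
    (s : SeparabilityFamily K (Free K A)) :
    ∀ x y : A, x ≠ y → s.a (Free.of K x) (Free.of K y) = 0 := by
  intro x y hxy
  rcases hskel.isEmpty_hom_or_isEmpty_hom_of_ne hdelta hxy with _ | _ <;>
    exact Subsingleton.elim _ _
end

section
/- Let K be a field, C a small K-linear category, and a a separability family for C. For each pair of objects x, y, choose a representation a x y = Σ_{i=1}^{n_{x,y}} f^i_{y,x} ⊗ g^i_{x,y} with f^i_{y,x} ∈ Hom_C(y,x) and g^i_{x,y} ∈ Hom_C(x,y) such that the family (g^i_{x,y})_{1 ≤ i ≤ n_{x,y}} is linearly independent over K, and let V_{y,x} ⊆ Hom_C(y,x) be the K-linear span of {f^i_{y,x} : 1 ≤ i ≤ n_{x,y}}. Then for every morphism f : x ⟶ z and every object y, postcomposition by f maps V_{y,x} into V_{y,z}; that is, f ∘ f^i_{y,x} ∈ V_{y,z} for all 1 ≤ i ≤ n_{x,y}. -/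
/-!
Let `a x y = Σⱼ fʲ ⊗ gʲ` and `a z y = Σₖ f'ᵏ ⊗ g'ᵏ`, and let `φ` be a functional on `Hom(x, y)`
with `φ (gʲ) = δᵢⱼ`, which exists because the `gʲ` are linearly independent. Contracting the
compatibility identity `Σⱼ (fʲ ≫ f) ⊗ gʲ = Σₖ f'ᵏ ⊗ (f ≫ g'ᵏ)` against `φ` in the second factor
gives `fⁱ ≫ f = Σₖ φ (f ≫ g'ᵏ) • f'ᵏ`.
-/

open CategoryTheory TensorProduct

section TensorSpan

variable {K M N ι κ : Type*} [Field K] [AddCommMonoid M] [Module K M]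
  [AddCommGroup N] [Module K N]

theorem LinearIndependent.exists_dual_eq_single {v : ι → N} (hv : LinearIndependent K v)
    (i : ι) : ∃ φ : N →ₗ[K] K, ∀ j, φ (v j) = Finsupp.single j 1 i := by
  obtain ⟨g, hg⟩ := LinearMap.exists_leftInverse_of_injective
    (Finsupp.linearCombination K v) (LinearMap.ker_eq_bot.mpr hv)
  refine ⟨Finsupp.lapply i ∘ₗ g, fun j => ?_⟩
  have hvj : v j = Finsupp.linearCombination K v (Finsupp.single j 1) := by simp
  rw [hvj, LinearMap.comp_apply, ← LinearMap.comp_apply g, hg, LinearMap.id_apply,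
    Finsupp.lapply_apply]

theorem rid_lTensor_sum_tmul [Fintype ι] (φ : N →ₗ[K] K) (f : ι → M) (g : ι → N) :
    TensorProduct.rid K M (LinearMap.lTensor M φ (∑ i, f i ⊗ₜ[K] g i)) = ∑ i, φ (g i) • f i := by
  simp [map_sum]

theorem mem_span_of_sum_tmul_eq [Fintype ι] [Fintype κ] {f : ι → M} {g : ι → N}
    (hg : LinearIndependent K g) {f' : κ → M} {g' : κ → N}
    (h : ∑ i, f i ⊗ₜ[K] g i = ∑ j, f' j ⊗ₜ[K] g' j) (i : ι) :
    f i ∈ Submodule.span K (Set.range f') := by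
  classical
  obtain ⟨φ, hφ⟩ := hg.exists_dual_eq_single i
  have hcontract := congrArg (fun t => TensorProduct.rid K M (LinearMap.lTensor M φ t)) h
  simp only [rid_lTensor_sum_tmul, hφ, Finsupp.single_apply, ite_smul, one_smul, zero_smul,
    Finset.sum_ite_eq', Finset.mem_univ, if_true] at hcontract
  rw [hcontract]
  exact Submodule.sum_smul_mem _ _ fun j _ => Submodule.subset_span ⟨j, rfl⟩

end TensorSpan

/-- Given representations `a x y = Σ_i f^i ⊗ g^i` with the `g^i` linearly independent,
postcomposition by any `f : x ⟶ z` maps the span of the `f^i_{y,x}` into the span of the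
`f^i_{y,z}`. -/
theorem comp_mem_span_sepFamily (K : Type*) [Field K]
    (C : Type*) [SmallCategory C] [Preadditive C] [Linear K C]
    (s : SeparabilityFamily K C)
    (n : C → C → ℕ)
    (F : ∀ x y : C, Fin (n x y) → (y ⟶ x))
    (G : ∀ x y : C, Fin (n x y) → (x ⟶ y))
    (hG : ∀ x y : C, LinearIndependent K (G x y))
    (hFG : ∀ x y : C, s.a x y = ∑ i : Fin (n x y), (F x y i) ⊗ₜ[K] (G x y i)) :
    ∀ (x z : C) (f : x ⟶ z) (y : C) (i : Fin (n x y)),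
      F x y i ≫ f ∈ Submodule.span K (Set.range (F z y)) := by
  intro x z f y
  have hcompat := s.compat f y
  simp only [hFG, map_sum, LinearMap.rTensor_tmul, LinearMap.lTensor_tmul,
    Linear.rightComp_apply, Linear.leftComp_apply] at hcompat
  exact mem_span_of_sum_tmul_eq (hG x y) hcompat
end

section
/- Let K be a field and C a small K-linear category admitting a separability family a. Let M : C ⥤ ModuleCat K be an additive K-linear functor (a left C-module). For each object x, let φ_x : ⊕_y (Hom_C(y,x) ⊗[K] M(y)) → M(x) be the K-linear map induced on each summand by f ⊗ m ↦ M(f)(m). Then there exists a family of K-linear maps ψ_x : M(x) → ⊕_y (Hom_C(y,x) ⊗[K] M(y)) such that (1) φ_x ∘ ψ_x = id_{M(x)} for every object x, and (2) the family ψ is a morphism of left C-modules: for every morphism f : z ⟶ x of C and every m ∈ M(z), ψ_x(M(f)(m)) is obtained from ψ_z(m) by applying postcomposition with f on each first tensor factor Hom_C(y,z) → Hom_C(y,x). -/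
/-! Writing `a x y = ∑ gᵢ ⊗ hᵢ`, the section is `ψ_x m = ∑_y ∑ᵢ gᵢ ⊗ M(hᵢ) m`.
Applying the action gives `M(∑_y comp (a x y)) m = M(𝟙 x) m = m`, and the compatibility
condition (iii) of the separability family is exactly what makes `ψ` commute with the
action of `C`. -/

open CategoryTheory TensorProduct

/-- The action of `C` on a left `C`-module `M` as a linear map
`Hom(y,x) ⊗ M(y) → M(x)`, `f ⊗ m ↦ M(f)(m)`. -/
noncomputable def actionMap (K : Type*) [Field K] {C : Type*} [Category C] [Preadditive C]
    [Linear K C] (M : C ⥤ ModuleCat K) [M.Additive] [M.Linear K] (x y : C) :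
    ((y ⟶ x) ⊗[K] M.obj y) →ₗ[K] M.obj x :=
  TensorProduct.lift (LinearMap.mk₂ K (fun (f : y ⟶ x) (m : M.obj y) => M.map f m)
    (fun f f' m => by simp) (fun r f m => by simp)
    (fun f m m' => by simp) (fun r f m => by simp))

section PartialAction

variable (K : Type*) [Field K] {C : Type*} [Category C] [Preadditive C] [Linear K C]
  (M : C ⥤ ModuleCat K) [M.Additive] [M.Linear K]

@[simp]
lemma actionMap_tmul {x y : C} (f : y ⟶ x) (m : M.obj y) :
    actionMap K M x y (f ⊗ₜ m) = M.map f m :=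
  rfl

noncomputable def partialAction {v w y : C} (t : (y ⟶ w) ⊗[K] (v ⟶ y)) :
    M.obj v →ₗ[K] (y ⟶ w) ⊗[K] M.obj y :=
  (actionMap K M y v).lTensor (y ⟶ w) ∘ₗ (TensorProduct.assoc K _ _ _).toLinearMap ∘ₗ
    TensorProduct.mk K _ _ t

variable {K M}

@[simp]
lemma partialAction_tmul {v w y : C} (g : y ⟶ w) (h : v ⟶ y) (m : M.obj v) :
    partialAction K M (g ⊗ₜ h) m = g ⊗ₜ M.map h m :=
  rfl

@[simp]
lemma partialAction_zero {v w y : C} (m : M.obj v) :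
    partialAction K M (0 : (y ⟶ w) ⊗[K] (v ⟶ y)) m = 0 := by
  simp [partialAction]

@[simp]
lemma partialAction_add {v w y : C} (t t' : (y ⟶ w) ⊗[K] (v ⟶ y)) (m : M.obj v) :
    partialAction K M (t + t') m = partialAction K M t m + partialAction K M t' m := by
  simp [partialAction]

lemma actionMap_partialAction {v w y : C} (t : (y ⟶ w) ⊗[K] (v ⟶ y)) (m : M.obj v) :
    actionMap K M w y (partialAction K M t m) = M.map (compMap K w v y t) m := by
  induction t using TensorProduct.induction_on with
  | zero => simp
  | tmul g h => simp [compMap]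
  | add t t' ht ht' => simp [ht, ht']

lemma partialAction_map {v w y z : C} (t : (y ⟶ w) ⊗[K] (v ⟶ y)) (f : z ⟶ v) (m : M.obj z) :
    partialAction K M t (M.map f m) =
      partialAction K M (LinearMap.lTensor _ (Linear.leftComp K y f) t) m := by
  induction t using TensorProduct.induction_on with
  | zero => simp
  | tmul g h => simp
  | add t t' ht ht' => simp [ht, ht']

lemma partialAction_rTensor {v w y z : C} (u : (y ⟶ z) ⊗[K] (v ⟶ y)) (f : z ⟶ w)
    (m : M.obj v) :
    partialAction K M (LinearMap.rTensor _ (Linear.rightComp K y f) u) m =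
      LinearMap.rTensor _ (Linear.rightComp K y f) (partialAction K M u m) := by
  induction u using TensorProduct.induction_on with
  | zero => simp
  | tmul g h => simp
  | add u u' hu hu' => simp [hu, hu']

end PartialAction

namespace SeparabilityFamily

variable {K : Type*} [Field K] {C : Type*} [Category C] [Preadditive C] [Linear K C]
  (s : SeparabilityFamily K C)

noncomputable def support (x : C) : Finset C :=
  (s.finite_support x).toFinset

lemma sum_support_eq_finsum {A : Type*} [AddCommMonoid A] (x : C) (g : C → A)
    (hg : ∀ y, s.a x y = 0 → g y = 0) : ∑ y ∈ s.support x, g y = ∑ᶠ y, g y :=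
  (finsum_eq_sum_of_support_subset g fun y hy => by simpa [support] using mt (hg y) hy).symm

lemma sum_support_compMap (x : C) : ∑ y ∈ s.support x, compMap K x x y (s.a x y) = 𝟙 x := by
  rw [s.sum_support_eq_finsum x _ fun y hy => by simp [hy], s.sum_comp]

variable (M : C ⥤ ModuleCat K) [M.Additive] [M.Linear K]

lemma partialAction_map_eq_rTensor {x z : C} (f : z ⟶ x) (y : C) (m : M.obj z) :
    partialAction K M (s.a x y) (M.map f m) =
      LinearMap.rTensor _ (Linear.rightComp K y f) (partialAction K M (s.a z y) m) := by
  rw [partialAction_map, ← s.compat, partialAction_rTensor]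

variable [DecidableEq C]

noncomputable def moduleSection (x : C) :
    M.obj x →ₗ[K] DirectSum C fun y => (y ⟶ x) ⊗[K] M.obj y :=
  ∑ y ∈ s.support x,
    DirectSum.lof K C (fun y => (y ⟶ x) ⊗[K] M.obj y) y ∘ₗ partialAction K M (s.a x y)

lemma toModule_actionMap_moduleSection (x : C) (m : M.obj x) :
    DirectSum.toModule K C (M.obj x) (fun y => actionMap K M x y) (s.moduleSection M x m) =
      m := by
  simp only [moduleSection, LinearMap.sum_apply, LinearMap.comp_apply, map_sum,
    DirectSum.toModule_lof, actionMap_partialAction]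
  rw [← LinearMap.sum_apply, ← ModuleCat.hom_sum, ← M.map_sum, s.sum_support_compMap, M.map_id]
  rfl

lemma moduleSection_map {x z : C} (f : z ⟶ x) (m : M.obj z) :
    s.moduleSection M x (M.map f m) =
      DirectSum.toModule K C (DirectSum C fun y => (y ⟶ x) ⊗[K] M.obj y)
        (fun y => DirectSum.lof K C (fun y => (y ⟶ x) ⊗[K] M.obj y) y ∘ₗ
          LinearMap.rTensor (M.obj y) (Linear.rightComp K y f))
        (s.moduleSection M z m) := by
  simp only [moduleSection, LinearMap.sum_apply, LinearMap.comp_apply, map_sum,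
    DirectSum.toModule_lof]
  rw [s.sum_support_eq_finsum x _ fun y hy => by simp [hy],
    s.sum_support_eq_finsum z _ fun y hy => by simp [hy]]
  simp only [partialAction_map_eq_rTensor]

end SeparabilityFamily

/-- If `C` admits a separability family, then for every left `C`-module `M` the canonical
map `⊕_y (Hom(y,x) ⊗ M(y)) → M(x)` admits a section `ψ` which is a morphism of left
`C`-modules. -/
theorem sepFamily_module_section (K : Type*) [Field K]
    (C : Type*) [SmallCategory C] [DecidableEq C] [Preadditive C] [Linear K C]
    (s : SeparabilityFamily K C)
    (M : C ⥤ ModuleCat K) [M.Additive] [M.Linear K] :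
    ∃ ψ : (∀ x : C, M.obj x →ₗ[K] DirectSum C (fun y : C => (y ⟶ x) ⊗[K] M.obj y)),
      (∀ x : C,
        (DirectSum.toModule K C (M.obj x) (fun y => actionMap K M x y)).comp (ψ x) =
          LinearMap.id) ∧
      (∀ (z x : C) (f : z ⟶ x) (m : M.obj z),
        ψ x (M.map f m) =
          DirectSum.toModule K C (DirectSum C (fun y : C => (y ⟶ x) ⊗[K] M.obj y))
            (fun y => (DirectSum.lof K C (fun y : C => (y ⟶ x) ⊗[K] M.obj y) y).comp
              (LinearMap.rTensor (M.obj y) (Linear.rightComp K y f)))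
            (ψ z m)) :=
  ⟨s.moduleSection M, fun x => LinearMap.ext (s.toModule_actionMap_moduleSection M x),
    fun _ _ f m => s.moduleSection_map M f m⟩
end

section
/- Let K be a field and C a small K-linear category admitting a separability family. Then every left C-module is projective: every additive K-linear functor M : C ⥤ ModuleCat K is a projective object in the category of left C-modules (the full subcategory of the functor category C ⥤ ModuleCat K whose objects are the additive K-linear functors), i.e., for every epimorphism π : N → P and every morphism φ : M → P of left C-modules with π a componentwise surjection, there exists a morphism ψ : M → N of left C-modules with π ∘ ψ = φ. -/
/-!
Averaging a family `σ y : M y ⟶ N y` of (not necessarily natural) morphisms against a separability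
family, `x ↦ ∑ y, ∑ M.map h ≫ σ y ≫ N.map g` where `a x y = ∑ g ⊗ h`, yields a natural
transformation `M ⟶ N` by the compatibility axiom. Averaging commutes with postcomposition by
natural transformations, and it fixes natural families because `∑ y, comp (a x y) = 𝟙 x`. So if
`s y` is a linear section of `π.app y`, the average of `φ.app y ≫ s y` is a natural lift of `φ`.
-/

open CategoryTheory TensorProduct

namespace CategoryTheory.Preadditive

variable {D : Type*} [Category D] [Preadditive D]

theorem comp_finsum {X Y Z : D} {ι : Type*} (f : X ⟶ Y) {g : ι → (Y ⟶ Z)}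
    (hg : Function.HasFiniteSupport g) : f ≫ ∑ᶠ i, g i = ∑ᶠ i, f ≫ g i :=
  (leftComp Z f).map_finsum hg

theorem finsum_comp {X Y Z : D} {ι : Type*} {f : ι → (X ⟶ Y)} (g : Y ⟶ Z)
    (hf : Function.HasFiniteSupport f) : (∑ᶠ i, f i) ≫ g = ∑ᶠ i, f i ≫ g :=
  (rightComp X g).map_finsum hf

end CategoryTheory.Preadditive

section Averaging

variable {K : Type*} [Field K] {C : Type*} [Category C] [Preadditive C] [Linear K C]
  {D : Type*} [Category D] [Preadditive D] [Linear K D]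

section Sandwich

variable {M N : C ⥤ D} [M.Additive] [M.Linear K] [N.Additive] [N.Linear K]

variable (K) in
noncomputable def sandwichMap (σ : ∀ y, M.obj y ⟶ N.obj y) (x z y : C) :
    ((y ⟶ z) ⊗[K] (x ⟶ y)) →ₗ[K] (M.obj x ⟶ N.obj z) :=
  TensorProduct.lift (LinearMap.mk₂ K (fun (g : y ⟶ z) (h : x ⟶ y) => M.map h ≫ σ y ≫ N.map g)
    (fun g g' h => by simp) (fun r g h => by simp)
    (fun g h h' => by simp) (fun r g h => by simp))

@[simp]
theorem sandwichMap_tmul (σ : ∀ y, M.obj y ⟶ N.obj y) {x z y : C} (g : y ⟶ z) (h : x ⟶ y) :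
    sandwichMap K σ x z y (g ⊗ₜ h) = M.map h ≫ σ y ≫ N.map g :=
  rfl

theorem sandwichMap_comp_map (σ : ∀ y, M.obj y ⟶ N.obj y) {x z : C} (f : x ⟶ z) (y : C)
    (t : (y ⟶ x) ⊗[K] (x ⟶ y)) :
    sandwichMap K σ x x y t ≫ N.map f
      = sandwichMap K σ x z y (LinearMap.rTensor (x ⟶ y) (Linear.rightComp K y f) t) := by
  induction t using TensorProduct.induction_on with
  | zero => simp
  | tmul g h => simp [Linear.rightComp_apply]
  | add t₁ t₂ h₁ h₂ => simp [Preadditive.add_comp, h₁, h₂]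

theorem map_comp_sandwichMap (σ : ∀ y, M.obj y ⟶ N.obj y) {x z : C} (f : x ⟶ z) (y : C)
    (t : (y ⟶ z) ⊗[K] (z ⟶ y)) :
    M.map f ≫ sandwichMap K σ z z y t
      = sandwichMap K σ x z y (LinearMap.lTensor (y ⟶ z) (Linear.leftComp K y f) t) := by
  induction t using TensorProduct.induction_on with
  | zero => simp
  | tmul g h => simp [Linear.leftComp_apply]
  | add t₁ t₂ h₁ h₂ => simp [Preadditive.comp_add, h₁, h₂]

theorem sandwichMap_comp_app {P : C ⥤ D} [P.Additive] [P.Linear K]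
    (σ : ∀ y, M.obj y ⟶ N.obj y) (π : N ⟶ P) (x z y : C) (t : (y ⟶ z) ⊗[K] (x ⟶ y)) :
    sandwichMap K σ x z y t ≫ π.app z = sandwichMap K (fun y => σ y ≫ π.app y) x z y t := by
  induction t using TensorProduct.induction_on with
  | zero => simp
  | tmul g h => simp
  | add t₁ t₂ h₁ h₂ => simp [Preadditive.add_comp, h₁, h₂]

theorem sandwichMap_app (φ : M ⟶ N) (x y : C) (t : (y ⟶ x) ⊗[K] (x ⟶ y)) :
    sandwichMap K φ.app x x y t = φ.app x ≫ N.map (compMap K x x y t) := by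
  induction t using TensorProduct.induction_on with
  | zero => simp
  | tmul g h => simp [compMap]
  | add t₁ t₂ h₁ h₂ => simp [Preadditive.comp_add, h₁, h₂]

end Sandwich

namespace SeparabilityFamily

variable (S : SeparabilityFamily K C)

theorem hasFiniteSupport_apply {W : Type*} [Zero W] (x : C)
    (F : ∀ y, ((y ⟶ x) ⊗[K] (x ⟶ y)) → W) (hF : ∀ y, F y 0 = 0) :
    Function.HasFiniteSupport fun y => F y (S.a x y) :=
  (S.finite_support x).subset fun y hy h => hy (show F y (S.a x y) = 0 by rw [h, hF])

variable {M N : C ⥤ D} [M.Additive] [M.Linear K] [N.Additive] [N.Linear K]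

noncomputable def average (σ : ∀ y, M.obj y ⟶ N.obj y) : M ⟶ N where
  app x := ∑ᶠ y, sandwichMap K σ x x y (S.a x y)
  naturality x z f := by
    rw [Preadditive.comp_finsum _ (S.hasFiniteSupport_apply z _ fun y => map_zero _),
      Preadditive.finsum_comp _ (S.hasFiniteSupport_apply x _ fun y => map_zero _)]
    refine finsum_congr fun y => ?_
    rw [map_comp_sandwichMap, sandwichMap_comp_map, S.compat f y]

theorem average_app (σ : ∀ y, M.obj y ⟶ N.obj y) (x : C) :
    (S.average σ).app x = ∑ᶠ y, sandwichMap K σ x x y (S.a x y) :=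
  rfl

theorem average_comp {P : C ⥤ D} [P.Additive] [P.Linear K]
    (σ : ∀ y, M.obj y ⟶ N.obj y) (π : N ⟶ P) :
    S.average σ ≫ π = S.average fun y => σ y ≫ π.app y := by
  ext x
  rw [NatTrans.comp_app, average_app, average_app,
    Preadditive.finsum_comp _ (S.hasFiniteSupport_apply x _ fun y => map_zero _)]
  exact finsum_congr fun y => sandwichMap_comp_app σ π x x y (S.a x y)

theorem average_app_eq_self (φ : M ⟶ N) : S.average φ.app = φ := by
  ext x
  have hsum : ∑ᶠ y, N.map (compMap K x x y (S.a x y)) = 𝟙 (N.obj x) := by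
    rw [← N.map_id, ← S.sum_comp x, ← Functor.coe_mapAddHom, AddMonoidHom.map_finsum _
      (S.hasFiniteSupport_apply x _ fun y => map_zero _)]
  rw [average_app, finsum_congr fun y => sandwichMap_app φ x y (S.a x y),
    ← Preadditive.comp_finsum _
      (S.hasFiniteSupport_apply x (fun y t => N.map (compMap K x x y t)) fun y => by simp), hsum,
    Category.comp_id]

end SeparabilityFamily

end Averaging

/-- If `C` admits a separability family, then every left `C`-module is projective: any
morphism into the target of a componentwise-surjective morphism of left `C`-modules lifts. -/
theorem sepFamily_module_projective (K : Type*) [Field K]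
    (C : Type*) [SmallCategory C] [Preadditive C] [Linear K C]
    (hsep : Nonempty (SeparabilityFamily K C))
    (M : C ⥤ ModuleCat K) [M.Additive] [M.Linear K] :
    ∀ (N P : C ⥤ ModuleCat K) [N.Additive] [N.Linear K] [P.Additive] [P.Linear K]
      (π : N ⟶ P) (φ : M ⟶ P),
      (∀ x : C, Function.Surjective (π.app x)) →
      ∃ ψ : M ⟶ N, ψ ≫ π = φ := by
  obtain ⟨S⟩ := hsep
  intro N P _ _ _ _ π φ hπ
  choose s hs using fun y => Module.projective_lifting_property _ LinearMap.id (hπ y)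
  refine ⟨S.average fun y => φ.app y ≫ ModuleCat.ofHom (s y), ?_⟩
  have hlift : ∀ y, (φ.app y ≫ ModuleCat.ofHom (s y)) ≫ π.app y = φ.app y := fun y => by
    ext m
    exact congrArg (· ((φ.app y).hom m)) (hs y)
  rw [S.average_comp, funext hlift, S.average_app_eq_self]
end
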